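/- arXiv:1001.4051 — 3 statements merged into one kernel-verified Lean document; each statement's English description precedes it below -/
import Mathlib

section
/- Let a ≤ c be real numbers and b = (a+c)/2. Define A = [[a, b, c], [2a, 2b, 2c]] and B = [[0, 0, 0], [a, c, b]]. If λ < a or λ > c, then the only vector x ∈ (ℝ ∪ {-∞})^3 with A ⊗ x = λ ⊗ B ⊗ x is the trivial vector (all entries -∞). Hence σ(A, B) = [a, c]. -/
open Finset

/-- Max-plus matrix-vector product over `WithBot ℝ`. -/
def mpMul {n m : ℕ} (A : Fin n → Fin m → WithBot ℝ) (x : Fin m → WithBot ℝ) :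
    Fin n → WithBot ℝ :=
  fun i => univ.sup fun j => A i j + x j

/-- `A = [[a,b,c],[2a,2b,2c]]` with `b = (a+c)/2`, as a `WithBot ℝ` matrix. -/
noncomputable def Amat (a c : ℝ) : Fin 2 → Fin 3 → WithBot ℝ :=
  fun i j => ((![![a, (a + c) / 2, c], ![2 * a, 2 * ((a + c) / 2), 2 * c]] :
    Fin 2 → Fin 3 → ℝ) i j : ℝ)

/-- `B = [[0,0,0],[a,c,b]]` with `b = (a+c)/2`, as a `WithBot ℝ` matrix. -/
noncomputable def Bmat (a c : ℝ) : Fin 2 → Fin 3 → WithBot ℝ :=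
  fun i j => ((![![0, 0, 0], ![a, c, (a + c) / 2]] : Fin 2 → Fin 3 → ℝ) i j : ℝ)

/-! Row `0` of `A ⊗ x = λ ⊗ B ⊗ x` reads `max (a + x₀, b + x₁, c + x₂) = λ + max (x₀, x₁, x₂)`.
All entries of that row of `A` lie in `[a, c]`, so its left side lies between `a + S` and `c + S`
for `S = max xⱼ`, which is finite when `x` is nontrivial; cancelling `S` gives `a ≤ λ ≤ c`.
Conversely, for `λ ∈ [a, c]` the finite vector `(0, λ - b, 2λ - b - c)` solves both rows. -/

section RowBounds

variable {n m : ℕ} (A B : Fin n → Fin m → WithBot ℝ) (x : Fin m → WithBot ℝ) (i : Fin n)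
  (r : ℝ)

theorem add_mpMul_le_mpMul (hAB : ∀ j, (r : WithBot ℝ) + B i j ≤ A i j) :
    r + mpMul B x i ≤ mpMul A x i := by
  rcases (univ : Finset (Fin m)).eq_empty_or_nonempty with hm | hm
  · simp [mpMul, hm]
  obtain ⟨j, -, hj⟩ := exists_mem_eq_sup univ hm fun j => B i j + x j
  calc (r : WithBot ℝ) + mpMul B x i = (r + B i j) + x j := by rw [mpMul, hj, add_assoc]
    _ ≤ A i j + x j := by gcongr; exact hAB j
    _ ≤ mpMul A x i := le_sup (f := fun j => A i j + x j) (mem_univ j)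

theorem mpMul_le_add_mpMul (hAB : ∀ j, A i j ≤ r + B i j) :
    mpMul A x i ≤ r + mpMul B x i :=
  Finset.sup_le fun j _ => calc
    A i j + x j ≤ r + (B i j + x j) := by rw [← add_assoc]; gcongr; exact hAB j
    _ ≤ r + mpMul B x i := by gcongr; exact le_sup (f := fun j => B i j + x j) (mem_univ j)

end RowBounds

theorem mpMul_coe {n m : ℕ} [NeZero m] (M : Fin n → Fin m → ℝ) (y : Fin m → ℝ) (i : Fin n) :
    mpMul (fun i j => (M i j : WithBot ℝ)) (fun j => (y j : WithBot ℝ)) i =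
      ↑(univ.sup' univ_nonempty fun j => M i j + y j) := by
  rw [coe_sup']
  rfl

theorem mpMul_Bmat_zero (a c : ℝ) (x : Fin 3 → WithBot ℝ) :
    mpMul (Bmat a c) x 0 = univ.sup x := by
  simp only [mpMul, Bmat]
  congr 1
  funext j
  fin_cases j <;> simp

theorem Amat_zero_bounds {a c : ℝ} (hac : a ≤ c) (j : Fin 3) :
    (a : WithBot ℝ) + Bmat a c 0 j ≤ Amat a c 0 j ∧ Amat a c 0 j ≤ c + Bmat a c 0 j := by
  fin_cases j <;> simp [Amat, Bmat, hac]
  constructor <;> linarith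

theorem mem_Icc_of_eigenvector {a c lam : ℝ} (hac : a ≤ c) {x : Fin 3 → WithBot ℝ}
    (hx : ∃ j, x j ≠ ⊥)
    (heq : mpMul (Amat a c) x = fun i => (lam : WithBot ℝ) + mpMul (Bmat a c) x i) :
    lam ∈ Set.Icc a c := by
  have hBx : mpMul (Bmat a c) x 0 ≠ ⊥ := by
    obtain ⟨j, hj⟩ := hx
    rw [mpMul_Bmat_zero]
    exact ne_bot_of_le_ne_bot hj (le_sup (mem_univ j))
  have hrow := congrFun heq 0
  constructor
  · have h := add_mpMul_le_mpMul _ _ x 0 a fun j => (Amat_zero_bounds hac j).1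
    rw [hrow, WithBot.add_le_add_iff_right hBx] at h
    exact_mod_cast h
  · have h := mpMul_le_add_mpMul _ _ x 0 c fun j => (Amat_zero_bounds hac j).2
    rw [hrow, WithBot.add_le_add_iff_right hBx] at h
    exact_mod_cast h

noncomputable def eigenvector (a c lam : ℝ) : Fin 3 → ℝ :=
  ![0, lam - (a + c) / 2, 2 * lam - (a + c) / 2 - c]

theorem mpMul_Amat_eigenvector {a c lam : ℝ} (hal : a ≤ lam) (hlc : lam ≤ c) :
    mpMul (Amat a c) (fun j => (eigenvector a c lam j : WithBot ℝ)) =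
      fun i => (lam : WithBot ℝ) +
        mpMul (Bmat a c) (fun j => (eigenvector a c lam j : WithBot ℝ)) i := by
  funext i
  unfold Amat Bmat
  rw [mpMul_coe, mpMul_coe, ← WithBot.coe_add, WithBot.coe_inj]
  fin_cases i <;> simp [eigenvector, Fin.univ_succ] <;> grind

/-- If `λ < a` or `λ > c`, the only solution of `A ⊗ x = λ ⊗ B ⊗ x` is trivial;
hence the spectrum `σ(A,B)` equals `[a, c]`. -/
theorem spectrum_eq_interval (a c : ℝ) (hac : a ≤ c) :
    (∀ lam : ℝ, (lam < a ∨ c < lam) → ∀ x : Fin 3 → WithBot ℝ,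
        (mpMul (Amat a c) x = fun i => (lam : WithBot ℝ) + mpMul (Bmat a c) x i) →
        ∀ j, x j = ⊥) ∧
    {lam : ℝ | ∃ x : Fin 3 → WithBot ℝ, (∃ j, x j ≠ ⊥) ∧
        mpMul (Amat a c) x = fun i => (lam : WithBot ℝ) + mpMul (Bmat a c) x i} =
      Set.Icc a c := by
  refine ⟨fun lam hlam x heq j => ?_, ?_⟩
  · by_contra hj
    obtain ⟨hal, hlc⟩ := mem_Icc_of_eigenvector hac ⟨j, hj⟩ heq
    rcases hlam with h | h <;> linarith
  · ext lam
    refine ⟨fun ⟨x, hx, heq⟩ => mem_Icc_of_eigenvector hac hx heq, fun ⟨hal, hlc⟩ => ?_⟩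
    exact ⟨_, ⟨0, WithBot.coe_ne_bot⟩, mpMul_Amat_eigenvector hal hlc⟩
end

section
/- Let A, B ∈ (ℝ ∪ {-∞})^{n×m}. If λ, μ are both in the spectrum σ(A,B) of the two-sided eigenproblem, witnessed respectively by nontrivial vectors x and y, and A, B have all entries finite, then max_i min_j (A_{ij} − B_{ij}) ≤ λ, μ ≤ min_i max_j (A_{ij} − B_{ij}); in particular σ(A,B) is contained in a compact interval determined by A and B. -/
open Finset

/-!
Fix a row `i` and a solution `z` of `A ⊗ z = t ⊗ B ⊗ z` with a finite entry. If `t` were below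
`min_j (A i j - B i j)`, then `t + B i j < A i j` for every `j`, and since some `z j` is finite
this makes `max_j (A i j + z j)` strictly larger than `t + max_j (B i j + z j)`; symmetrically
above `max_j (A i j - B i j)`. Hence `t` lies between the row minimum and row maximum of `A - B`
for every row, which is the claimed interval.
-/

lemma WithBot.coe_add_finset_sup {ι α : Type*} [LinearOrder α] [Add α] [AddLeftMono α]
    (s : Finset ι) (t : α) (f : ι → WithBot α) :
    (t : WithBot α) + s.sup f = s.sup fun j => (t : WithBot α) + f j :=
  apply_sup_eq_sup_comp_of_linearOrder (fun u => (t : WithBot α) + u)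
    (fun _ _ h => add_le_add_right h _) (WithBot.add_bot _)

lemma Finset.sup_coe_add_lt_sup_coe_add {ι α : Type*} [Fintype ι] [LinearOrder α] [Add α]
    [AddRightStrictMono α] {c d : ι → α} (hcd : ∀ j, c j < d j) {x : ι → WithBot α}
    (hx : ∃ j, x j ≠ ⊥) :
    univ.sup (fun j => (c j : WithBot α) + x j) < univ.sup fun j => (d j : WithBot α) + x j := by
  obtain ⟨k, hk⟩ := hx
  have hlt (j : ι) (hj : x j ≠ ⊥) : (c j : WithBot α) + x j < (d j : WithBot α) + x j :=
    WithBot.add_lt_add_right hj (WithBot.coe_lt_coe.mpr (hcd j))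
  have hbot : ⊥ < univ.sup fun j => (d j : WithBot α) + x j :=
    bot_lt_iff_ne_bot.mpr fun h =>
      (hlt k hk).ne_bot ((Finset.sup_eq_bot_iff _ _).mp h k (mem_univ k))
  refine (Finset.sup_lt_iff hbot).mpr fun j _ => ?_
  by_cases hj : x j = ⊥
  · simpa [hj] using hbot
  · exact (hlt j hj).trans_le (le_sup (f := fun j => (d j : WithBot α) + x j) (mem_univ j))

theorem mem_Icc_inf'_sub_sup'_sub_of_sup_add_eq {ι : Type*} [Fintype ι]
    (hι : (univ : Finset ι).Nonempty) {a b : ι → ℝ} {x : ι → WithBot ℝ} (hx : ∃ j, x j ≠ ⊥)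
    {t : ℝ}
    (h : univ.sup (fun j => (a j : WithBot ℝ) + x j) =
      t + univ.sup fun j => (b j : WithBot ℝ) + x j) :
    t ∈ Set.Icc (univ.inf' hι fun j => a j - b j) (univ.sup' hι fun j => a j - b j) := by
  simp only [WithBot.coe_add_finset_sup, ← add_assoc, ← WithBot.coe_add] at h
  constructor
  · by_contra! hlt
    have hcd (j : ι) : t + b j < a j := by
      have := (lt_inf'_iff hι).mp hlt j (mem_univ j)
      linarith
    exact (sup_coe_add_lt_sup_coe_add hcd hx).ne h.symm
  · by_contra! hlt
    have hcd (j : ι) : a j < t + b j := by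
      have := (sup'_lt_iff hι).mp hlt j (mem_univ j)
      linarith
    exact (sup_coe_add_lt_sup_coe_add hcd hx).ne h

theorem mem_Icc_of_mpMul_eq {n m : ℕ} (hn : (univ : Finset (Fin n)).Nonempty)
    (hm : (univ : Finset (Fin m)).Nonempty) (A B : Fin n → Fin m → ℝ) {z : Fin m → WithBot ℝ}
    (hz : ∃ j, z j ≠ ⊥) {t : ℝ}
    (h : mpMul (fun i j => (A i j : WithBot ℝ)) z =
      fun i => (t : WithBot ℝ) + mpMul (fun i j => (B i j : WithBot ℝ)) z i) :
    t ∈ Set.Icc (univ.sup' hn fun i => univ.inf' hm fun j => A i j - B i j)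
      (univ.inf' hn fun i => univ.sup' hm fun j => A i j - B i j) := by
  have hrow (i : Fin n) := mem_Icc_inf'_sub_sup'_sub_of_sup_add_eq hm hz (congrFun h i)
  exact ⟨sup'_le _ _ fun i _ => (hrow i).1, le_inf' _ _ fun i _ => (hrow i).2⟩

/-- If `λ, μ ∈ σ(A,B)` (finite matrices), both satisfy
`max_i min_j (A_{ij} - B_{ij}) ≤ · ≤ min_i max_j (A_{ij} - B_{ij})`;
in particular `σ(A,B)` is contained in this compact interval. -/
theorem spectrum_subset_compact_interval {n m : ℕ} (hn : 0 < n) (hm : 0 < m)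
    (A B : Fin n → Fin m → ℝ) (lam mu : ℝ) (x y : Fin m → WithBot ℝ)
    (hx : ∃ j, x j ≠ ⊥) (hy : ∃ j, y j ≠ ⊥)
    (hlam : mpMul (fun i j => (A i j : WithBot ℝ)) x =
      fun i => (lam : WithBot ℝ) + mpMul (fun i j => (B i j : WithBot ℝ)) x i)
    (hmu : mpMul (fun i j => (A i j : WithBot ℝ)) y =
      fun i => (mu : WithBot ℝ) + mpMul (fun i j => (B i j : WithBot ℝ)) y i) :
    lam ∈ Set.Icc
        (univ.sup' (univ_nonempty_iff.mpr (Fin.pos_iff_nonempty.mp hn))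
          fun i => univ.inf' (univ_nonempty_iff.mpr (Fin.pos_iff_nonempty.mp hm))
            fun j => A i j - B i j)
        (univ.inf' (univ_nonempty_iff.mpr (Fin.pos_iff_nonempty.mp hn))
          fun i => univ.sup' (univ_nonempty_iff.mpr (Fin.pos_iff_nonempty.mp hm))
            fun j => A i j - B i j) ∧
    mu ∈ Set.Icc
        (univ.sup' (univ_nonempty_iff.mpr (Fin.pos_iff_nonempty.mp hn))
          fun i => univ.inf' (univ_nonempty_iff.mpr (Fin.pos_iff_nonempty.mp hm))
            fun j => A i j - B i j)
        (univ.inf' (univ_nonempty_iff.mpr (Fin.pos_iff_nonempty.mp hn))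
          fun i => univ.sup' (univ_nonempty_iff.mpr (Fin.pos_iff_nonempty.mp hm))
            fun j => A i j - B i j) ∧
    {t : ℝ | ∃ z : Fin m → WithBot ℝ, (∃ j, z j ≠ ⊥) ∧
        mpMul (fun i j => (A i j : WithBot ℝ)) z =
          fun i => (t : WithBot ℝ) + mpMul (fun i j => (B i j : WithBot ℝ)) z i} ⊆
      Set.Icc
        (univ.sup' (univ_nonempty_iff.mpr (Fin.pos_iff_nonempty.mp hn))
          fun i => univ.inf' (univ_nonempty_iff.mpr (Fin.pos_iff_nonempty.mp hm))
            fun j => A i j - B i j)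
        (univ.inf' (univ_nonempty_iff.mpr (Fin.pos_iff_nonempty.mp hn))
          fun i => univ.sup' (univ_nonempty_iff.mpr (Fin.pos_iff_nonempty.mp hm))
            fun j => A i j - B i j) := by
  have hn' := univ_nonempty_iff.mpr (Fin.pos_iff_nonempty.mp hn)
  have hm' := univ_nonempty_iff.mpr (Fin.pos_iff_nonempty.mp hm)
  exact ⟨mem_Icc_of_mpMul_eq hn' hm' A B hx hlam, mem_Icc_of_mpMul_eq hn' hm' A B hy hmu,
    fun t ⟨z, hz, h⟩ => mem_Icc_of_mpMul_eq hn' hm' A B hz h⟩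
end

section
/- Let A ∈ (ℝ ∪ {-∞})^{n×m}, b ∈ ℝ^n, and suppose x solves A ⊗ x = b. Then for each k ∈ {1, …, n} there exists a column index i such that k minimizes b_j − A_{ji} over all j with A_{ji} finite (i.e., k ∈ T(b, A_{·i})). Conversely, if the sets T(b, A_{·i}) for i = 1, …, m cover {1, …, n}, then x defined by x_i = min { b_j − A_{ji} : A_{ji} finite } (and x_i = -∞ if column i is entirely -∞) solves A ⊗ x = b. -/
open Finset

/-- `k ∈ T(b, z)`: `z k` is finite and `k` minimizes `b_j - z_j` over indices
where `z` is finite. -/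
def memT {n : ℕ} (b : Fin n → ℝ) (z : Fin n → WithBot ℝ) (k : Fin n) : Prop :=
  ∃ r : ℝ, z k = (r : WithBot ℝ) ∧
    ∀ l : Fin n, ∀ s : ℝ, z l = (s : WithBot ℝ) → b k - r ≤ b l - s

/-- The principal solution: `x_i = min { b_j - A_{ji} : A_{ji} finite }`, and
`x_i = -∞` if column `i` is identically `-∞`. -/
noncomputable def principalSol {n m : ℕ} (A : Fin n → Fin m → WithBot ℝ)
    (b : Fin n → ℝ) : Fin m → WithBot ℝ :=
  fun i => if ∀ j, A j i = ⊥ then ⊥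
    else (sInf {t : ℝ | ∃ j, ∃ r : ℝ, A j i = (r : WithBot ℝ) ∧ t = b j - r} : ℝ)

/-!
`A ⊗ x = b` says that every term `A_{ki} + x_i` is at most `b_k` and that each row attains
`b_k`. The first condition bounds `x_i` by `b_j - A_{ji}` for all finite `A_{ji}`, so a row
attaining `b_k` through column `i` forces `k ∈ T(b, A_{·i})`. Conversely the principal solution
is the largest `x` satisfying the first condition, and `k ∈ T(b, A_{·i})` says exactly that
its `i`-th coordinate is `b_k - A_{ki}`, so a cover makes every row attain `b_k`.
-/

theorem Finset.sup_eq_iff_of_bot_lt {ι α : Type*} [LinearOrder α] [OrderBot α]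
    {s : Finset ι} {f : ι → α} {c : α} (hc : ⊥ < c) :
    s.sup f = c ↔ (∀ i ∈ s, f i ≤ c) ∧ ∃ i ∈ s, f i = c := by
  constructor
  · rintro rfl
    obtain ⟨i, hi, hle⟩ := (Finset.le_sup_iff hc).1 le_rfl
    exact ⟨fun i hi => le_sup hi, i, hi, le_antisymm (le_sup hi) hle⟩
  · rintro ⟨hle, i, hi, rfl⟩
    exact le_antisymm (Finset.sup_le hle) (le_sup hi)

section MaxPlus

variable {n m : ℕ} (A : Fin n → Fin m → WithBot ℝ) (b : Fin n → ℝ)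

theorem mpMul_eq_coe_iff (x : Fin m → WithBot ℝ) :
    (mpMul A x = fun k => (b k : WithBot ℝ)) ↔
      (∀ k i, A k i + x i ≤ b k) ∧ ∀ k, ∃ i, A k i + x i = b k := by
  have hrow (k : Fin n) := Finset.sup_eq_iff_of_bot_lt (s := univ)
    (f := fun i => A k i + x i) (WithBot.bot_lt_coe (b k))
  simp only [funext_iff, mpMul, hrow, mem_univ, true_imp_iff, true_and, forall_and]

theorem memT_of_add_eq {z : Fin n → WithBot ℝ} {c : WithBot ℝ} {k : Fin n}
    (hle : ∀ l, z l + c ≤ b l) (heq : z k + c = b k) : memT b z k := by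
  obtain ⟨r, c', hr, rfl, hrc⟩ := WithBot.add_eq_coe.1 heq
  refine ⟨r, hr.symm, fun l s hs => ?_⟩
  have hl : s + c' ≤ b l := by exact_mod_cast hs ▸ hle l
  linarith

theorem bddBelow_principalSol_set (i : Fin m) :
    BddBelow {t : ℝ | ∃ j, ∃ r : ℝ, A j i = (r : WithBot ℝ) ∧ t = b j - r} := by
  refine (Set.finite_range fun j => b j - (A j i).unbotD 0).bddBelow.mono ?_
  rintro t ⟨j, r, hA, rfl⟩
  exact ⟨j, by simp [hA]⟩

theorem add_principalSol_le (k : Fin n) (i : Fin m) : A k i + principalSol A b i ≤ b k := by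
  unfold principalSol
  split_ifs with hcol
  · simp
  · cases hA : A k i with
    | bot => simp
    | coe r =>
      have hinf := csInf_le (bddBelow_principalSol_set A b i) ⟨k, r, hA, rfl⟩
      rw [← WithBot.coe_add, WithBot.coe_le_coe]
      linarith

theorem add_principalSol_eq_of_memT {k : Fin n} {i : Fin m} (hk : memT b (fun l => A l i) k) :
    A k i + principalSol A b i = b k := by
  obtain ⟨r, hr : A k i = r, hmin⟩ := hk
  have hcol : ¬ ∀ j, A j i = ⊥ := fun h => WithBot.bot_ne_coe (h k ▸ hr)
  have hinf : sInf {t : ℝ | ∃ j, ∃ r : ℝ, A j i = (r : WithBot ℝ) ∧ t = b j - r} = b k - r :=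
    le_antisymm (csInf_le (bddBelow_principalSol_set A b i) ⟨k, r, hr, rfl⟩)
      (le_csInf ⟨_, k, r, hr, rfl⟩ fun _ ⟨j, s, hj, ht⟩ => ht ▸ hmin j s hj)
  simp only [principalSol, if_neg hcol, hinf]
  rw [hr, ← WithBot.coe_add, add_sub_cancel]

end MaxPlus

/-- If `x` solves `A ⊗ x = b` then the sets `T(b, A_{·i})` cover `{1,…,n}`;
conversely, if they cover, the principal solution solves `A ⊗ x = b`. -/
theorem onesided_cover_and_principal {n m : ℕ}
    (A : Fin n → Fin m → WithBot ℝ) (b : Fin n → ℝ) :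
    (∀ x : Fin m → WithBot ℝ, (mpMul A x = fun k => (b k : WithBot ℝ)) →
      ∀ k : Fin n, ∃ i : Fin m, memT b (fun l => A l i) k) ∧
    ((∀ k : Fin n, ∃ i : Fin m, memT b (fun l => A l i) k) →
      mpMul A (principalSol A b) = fun k => (b k : WithBot ℝ)) := by
  refine ⟨fun x hx k => ?_, fun hcov => ?_⟩
  · obtain ⟨hle, hatt⟩ := (mpMul_eq_coe_iff A b x).1 hx
    obtain ⟨i, hi⟩ := hatt k
    exact ⟨i, memT_of_add_eq b (fun l => hle l i) hi⟩
  · refine (mpMul_eq_coe_iff A b _).2 ⟨add_principalSol_le A b, fun k => ?_⟩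
    obtain ⟨i, hi⟩ := hcov k
    exact ⟨i, add_principalSol_eq_of_memT A b hi⟩
end
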